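/- Let G = (V,E) be a finite directed graph with V = {v_1, …, v_n}, n ≥ 1, and let C'(G) be the card set on the 4n×1 grid defined via the row-assignment r(v_i, 1) = 2i−1, r(v_i, 2) = 2i, r(v_i, 3) = 4n+1−2i, r(v_i, 4) = 4n+2−2i, consisting of a card (r(u,1), r(v,1)) for each edge (u,v) ∈ E and cards (r(v_i, j), r(v_i, j+1)) for each i ∈ {1,…,n} and j ∈ {1,2,3}. Then G has an even dicycle-factor if and only if C'(G) admits a swish of size 4n where each card may be used as-is, horizontally flipped, rotated by 180 degrees, or both; indeed, since the horizontal flip is the identity on a grid of width 1, this holds if and only if C'(G) admits a swish of size 4n with 180-degree rotation allowed and no flip. -/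

import Mathlib

/-- Every orbit `{π^m v : m ∈ ℤ}` of the permutation `π` has even cardinality. -/
def AllOrbitsEven {V : Type} (π : Equiv.Perm V) : Prop :=
  ∀ v : V, Even (Nat.card {u : V | ∃ m : ℤ, (π ^ m) v = u})

/-- `F` is an even dicycle-factor of the directed graph with edge set `E`:
`F = {(v, π v) : v ∈ V}` for a permutation `π` of `V` all of whose edges lie
in `E` and all of whose orbits have even cardinality. -/
def IsEvenDicycleFactor {V : Type} [DecidableEq V] [Fintype V]
    (E F : Finset (V × V)) : Prop :=
  ∃ π : Equiv.Perm V,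
    F = Finset.univ.image (fun v => (v, π v)) ∧
    (∀ v : V, (v, π v) ∈ E) ∧ AllOrbitsEven π

/-- The row of the point `v_i^j` on the `4n × 1` grid, where the vertices are
`v_1, …, v_n` (here 0-indexed as `i : Fin n`, so `v_{i+1}`):
`r(v_i, 1) = 2i - 1`, `r(v_i, 2) = 2i`, `r(v_i, 3) = 4n + 1 - 2i`,
`r(v_i, 4) = 4n + 2 - 2i` (with the 1-indexed `i`). -/
def rowOf (n : ℕ) (i : Fin n) (j : ℕ) : ℕ :=
  if j = 1 then 2 * (i : ℕ) + 1
  else if j = 2 then 2 * (i : ℕ) + 2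
  else if j = 3 then 4 * n - 1 - 2 * (i : ℕ)
  else 4 * n - 2 * (i : ℕ)

/-- The card set `C'(G)` on the `4n × 1` grid: a card `(r(u,1), r(v,1))` for every
edge `(u,v) ∈ E`, and cards `(r(v_i, j), r(v_i, j+1))` for every `i` and `j ∈ {1,2,3}`.
A card is the ordered pair of the rows of its hoop and of its ball. -/
def cardSetW1 (n : ℕ) (E : Finset (Fin n × Fin n)) : Finset (ℕ × ℕ) :=
  E.image (fun e => (rowOf n e.1 1, rowOf n e.2 1)) ∪
    (Finset.univ ×ˢ ({1, 2, 3} : Finset ℕ)).image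
      fun p => (rowOf n p.1 p.2, rowOf n p.1 (p.2 + 1))

/-- 180-degree rotation of a card on the `4n × 1` grid: `(a, b) ↦ (4n+1-a, 4n+1-b)`. -/
def rotW1 (n : ℕ) (c : ℕ × ℕ) : ℕ × ℕ := (4 * n + 1 - c.1, 4 * n + 1 - c.2)

/-- `S` is a swish on the `4n × 1` grid with 180-degree rotation allowed (and no flip):
each card of `S` can be used as-is or rotated so that every row receives either no hoop
and no ball, or exactly one hoop and exactly one ball. -/
def IsRotSwish (n : ℕ) (S : Finset (ℕ × ℕ)) : Prop :=
  ∃ b : ℕ × ℕ → Bool,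
    ∀ x ∈ Finset.Icc 1 (4 * n),
      (((S.filter fun c => (if b c then rotW1 n c else c).1 = x).card = 0) ∧
        ((S.filter fun c => (if b c then rotW1 n c else c).2 = x).card = 0)) ∨
      (((S.filter fun c => (if b c then rotW1 n c else c).1 = x).card = 1) ∧
        ((S.filter fun c => (if b c then rotW1 n c else c).2 = x).card = 1))

/-- The placement of a card on the `4n × 1` (width-1) grid under one of the four
transformations: `0` = as-is, `1` = horizontal flip (which is the identity on a
grid of width 1), `2` = 180-degree rotation, `3` = flip and rotation (which
coincides with the rotation on a grid of width 1). -/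
def place4 (n : ℕ) (t : Fin 4) (c : ℕ × ℕ) : ℕ × ℕ :=
  if (t : ℕ) ≤ 1 then c else rotW1 n c

/-- `S` is a swish on the `4n × 1` grid where each card may be used as-is,
horizontally flipped, rotated by 180 degrees, or both. -/
def IsAllSwish (n : ℕ) (S : Finset (ℕ × ℕ)) : Prop :=
  ∃ g : ℕ × ℕ → Fin 4,
    ∀ x ∈ Finset.Icc 1 (4 * n),
      (((S.filter fun c => (place4 n (g c) c).1 = x).card = 0) ∧
        ((S.filter fun c => (place4 n (g c) c).2 = x).card = 0)) ∨
      (((S.filter fun c => (place4 n (g c) c).1 = x).card = 1) ∧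
        ((S.filter fun c => (place4 n (g c) c).2 = x).card = 1))

open Function

lemma orbit_set_eq {V : Type} (π : Equiv.Perm V) (v : V) :
    {u : V | ∃ m : ℤ, (π ^ m) v = u} = MulAction.orbit (Subgroup.zpowers π) v := by
  ext u
  simp only [Set.mem_setOf_eq, MulAction.mem_orbit_iff]
  constructor
  · rintro ⟨m, hm⟩
    exact ⟨⟨π ^ m, Subgroup.zpow_mem _ (Subgroup.mem_zpowers π) m⟩, hm⟩
  · rintro ⟨⟨g, hg⟩, h⟩
    obtain ⟨m, rfl⟩ := Subgroup.mem_zpowers_iff.mp hg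
    exact ⟨m, h⟩

lemma orbit_card {V : Type} [Fintype V] (π : Equiv.Perm V) (v : V) :
    Nat.card {u : V | ∃ m : ℤ, (π ^ m) v = u} = Function.minimalPeriod π v := by
  classical
  rw [orbit_set_eq, Nat.card_eq_fintype_card, ← MulAction.minimalPeriod_eq_card]
  rfl

lemma minPeriod_pos {V : Type} [Fintype V] (π : Equiv.Perm V) (v : V) :
    0 < Function.minimalPeriod π v := by
  apply Function.minimalPeriod_pos_of_mem_periodicPts
  refine ⟨orderOf π, orderOf_pos π, ?_⟩
  show (⇑π)^[orderOf π] v = v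
  rw [← Equiv.Perm.coe_pow, pow_orderOf_eq_one]; rfl

lemma evenorbits_iff_alternating {V : Type} [Fintype V] (π : Equiv.Perm V) :
    AllOrbitsEven π ↔ ∃ ε : V → Bool, ∀ v, ε (π v) = !ε v := by
  classical
  constructor
  · intro h
    set sd : Setoid V := ⟨π.SameCycle,
      ⟨fun x => Equiv.Perm.SameCycle.refl π x, fun h => h.symm, fun h1 h2 => h1.trans h2⟩⟩ with hsd
    set rep : V → V := fun v => (Quotient.mk sd v).out with hrepdef
    have hrep : ∀ v, π.SameCycle (rep v) v := fun v =>
      Quotient.exact ((Quotient.mk sd v).out_eq)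
    have hreppi : ∀ v, rep (π v) = rep v := by
      intro v
      have : Quotient.mk sd (π v) = Quotient.mk sd v :=
        Quotient.sound (Equiv.Perm.SameCycle.symm ⟨1, by simp⟩)
      simp only [hrepdef, this]
    have hex : ∀ v, ∃ k : ℕ, (π ^ k) (rep v) = v := by
      intro v
      obtain ⟨i, _, hi⟩ := (hrep v).exists_pow_eq'
      exact ⟨i, hi⟩
    set kk : V → ℕ := fun v => Nat.find (hex v) with hkk
    refine ⟨fun v => decide (kk v % 2 = 1), ?_⟩
    intro v
    set r := rep v with hr
    set T := Function.minimalPeriod π r with hT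
    have hTpos : 0 < T := minPeriod_pos π r
    have hT2 : 2 ∣ T := by
      have := h r
      rw [orbit_card] at this
      exact this.two_dvd
    have hper : Function.IsPeriodicPt π T r := Function.isPeriodicPt_minimalPeriod π r
    -- any exponent can be reduced mod T
    have hmod : ∀ m : ℕ, (π ^ (m % T)) r = (π ^ m) r := by
      intro m
      have := hper.iterate_mod_apply m
      simpa only [← Equiv.Perm.coe_pow] using this
    have huniq : ∀ a b : ℕ, a < T → b < T → (π ^ a) r = (π ^ b) r → a = b := by
      intro a b ha hb hab
      rcases le_total a b with hle | hle
      · have h1 : (π ^ (b - a)) r = r := by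
          have : (π ^ a) ((π ^ (b - a)) r) = (π ^ a) r := by
            rw [← Equiv.Perm.mul_apply, ← pow_add, Nat.add_sub_cancel' hle, hab]
          exact (π ^ a).injective this
        have : b - a = 0 := Function.IsPeriodicPt.eq_zero_of_lt_minimalPeriod h1 (by omega)
        omega
      · have h1 : (π ^ (a - b)) r = r := by
          have : (π ^ b) ((π ^ (a - b)) r) = (π ^ b) r := by
            rw [← Equiv.Perm.mul_apply, ← pow_add, Nat.add_sub_cancel' hle, ← hab]
          exact (π ^ b).injective this
        have : a - b = 0 := Function.IsPeriodicPt.eq_zero_of_lt_minimalPeriod h1 (by omega)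
        omega
    have hspec : ∀ w, (π ^ kk w) (rep w) = w := fun w => Nat.find_spec (hex w)
    have hmin : ∀ w m, (π ^ m) (rep w) = w → kk w ≤ m := fun w m hm => Nat.find_min' (hex w) hm
    have hklt : ∀ w : V, rep w = r → kk w < T := by
      intro w hw
      have h1 : (π ^ (kk w % T)) (rep w) = w := by
        rw [hw, hmod, ← hw]; exact hspec w
      have h2 := hmin w _ h1
      have h3 : kk w % T < T := Nat.mod_lt _ hTpos
      omega
    have hrpv : rep (π v) = r := by rw [hreppi]
    have hkpv : kk (π v) = (kk v + 1) % T := by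
      apply huniq _ _ (hklt _ hrpv) (Nat.mod_lt _ hTpos)
      have e1 : (π ^ (kk (π v))) r = π v := by
        have h0 : (π ^ (kk (π v))) (rep (π v)) = π v := hspec (π v)
        rwa [hrpv] at h0
      have e2 : (π ^ ((kk v + 1) % T)) r = π v := by
        rw [hmod, pow_succ', Equiv.Perm.mul_apply]
        congr 1
        exact hspec v
      rw [e1, e2]
    show decide (kk (π v) % 2 = 1) = !decide (kk v % 2 = 1)
    have hparity : (kk v + 1) % T % 2 = (kk v + 1) % 2 := Nat.mod_mod_of_dvd _ hT2
    rw [hkpv]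
    rcases Nat.even_or_odd (kk v) with he | ho
    · have h1 : kk v % 2 = 0 := Nat.even_iff.mp he
      have h2 : (kk v + 1) % 2 = 1 := by omega
      simp [hparity, h1, h2]
    · have h1 : kk v % 2 = 1 := Nat.odd_iff.mp ho
      have h2 : (kk v + 1) % 2 = 0 := by omega
      simp [hparity, h1, h2]
  · rintro ⟨ε, hε⟩ v
    rw [orbit_card]
    set T := Function.minimalPeriod π v with hT
    have hper : (⇑π)^[T] v = v := Function.isPeriodicPt_minimalPeriod π v
    have key : ∀ k : ℕ, ε ((⇑π)^[k] v) = if k % 2 = 1 then !ε v else ε v := by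
      intro k
      induction k with
      | zero => simp
      | succ k ih =>
        rw [Function.iterate_succ_apply', hε, ih]
        rcases Nat.even_or_odd k with he | ho
        · have h1 : k % 2 = 0 := Nat.even_iff.mp he
          have h2 : (k + 1) % 2 = 1 := by omega
          simp [h1, h2]
        · have h1 : k % 2 = 1 := Nat.odd_iff.mp ho
          have h2 : (k + 1) % 2 = 0 := by omega
          simp [h1, h2]
    have := key T
    rw [hper] at this
    rcases Nat.even_or_odd T with he | ho
    · exact he
    · exfalso
      have h1 : T % 2 = 1 := Nat.odd_iff.mp ho
      rw [h1] at this
      simp at this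

/-- edge card -/
def eC (u v : ℕ) : ℕ × ℕ := (2*u+1, 2*v+1)
/-- first vertex card -/
def aC (i : ℕ) : ℕ × ℕ := (2*i+1, 2*i+2)
/-- second vertex card -/
def bC (n i : ℕ) : ℕ × ℕ := (2*i+2, 4*n-1-2*i)
/-- third vertex card -/
def cC (n i : ℕ) : ℕ × ℕ := (4*n-1-2*i, 4*n-2*i)
/-- placement of a card -/
def pl (n : ℕ) (b : ℕ × ℕ → Bool) (c : ℕ × ℕ) : ℕ × ℕ := if b c then rotW1 n c else c

lemma mem_cardSetW1 {n : ℕ} {E : Finset (Fin n × Fin n)} {c : ℕ × ℕ} :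
    c ∈ cardSetW1 n E ↔
      (∃ u v : Fin n, (u, v) ∈ E ∧ c = eC (u:ℕ) (v:ℕ)) ∨
      (∃ i : Fin n, c = aC (i:ℕ) ∨ c = bC n (i:ℕ) ∨ c = cC n (i:ℕ)) := by
  unfold cardSetW1
  rw [Finset.mem_union]
  constructor
  · rintro (h | h)
    · obtain ⟨e, he, heq⟩ := Finset.mem_image.mp h
      exact Or.inl ⟨e.1, e.2, by simpa using he, by rw [← heq]; rfl⟩
    · obtain ⟨p, hp, heq⟩ := Finset.mem_image.mp h
      right
      refine ⟨p.1, ?_⟩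
      have hp2 : p.2 = 1 ∨ p.2 = 2 ∨ p.2 = 3 := by
        have := (Finset.mem_product.mp hp).2; simpa using this
      rcases hp2 with h2 | h2 | h2
      · left; rw [← heq, h2]; rfl
      · right; left; rw [← heq, h2]; rfl
      · right; right; rw [← heq, h2]; rfl
  · rintro (⟨u, v, hE', rfl⟩ | ⟨i, rfl | rfl | rfl⟩)
    · exact Or.inl (Finset.mem_image.mpr ⟨(u, v), hE', rfl⟩)
    · exact Or.inr (Finset.mem_image.mpr ⟨(i, 1), by simp, rfl⟩)
    · exact Or.inr (Finset.mem_image.mpr ⟨(i, 2), by simp, rfl⟩)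
    · exact Or.inr (Finset.mem_image.mpr ⟨(i, 3), by simp, rfl⟩)

lemma placed_cases {n : ℕ} (hn : 1 ≤ n) {E : Finset (Fin n × Fin n)} (b : ℕ × ℕ → Bool)
    {c : ℕ × ℕ} (hc : c ∈ cardSetW1 n E) :
    (∃ u v : Fin n, (u:ℕ) < n ∧ (v:ℕ) < n ∧ (u, v) ∈ E ∧ c = eC (u:ℕ) (v:ℕ) ∧ b c = false ∧
      (pl n b c).1 = 2*(u:ℕ)+1 ∧ (pl n b c).2 = 2*(v:ℕ)+1) ∨
    (∃ u v : Fin n, (u:ℕ) < n ∧ (v:ℕ) < n ∧ (u, v) ∈ E ∧ c = eC (u:ℕ) (v:ℕ) ∧ b c = true ∧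
      (pl n b c).1 = 4*n-2*(u:ℕ) ∧ (pl n b c).2 = 4*n-2*(v:ℕ)) ∨
    (∃ q : Fin n, (q:ℕ) < n ∧ c = aC (q:ℕ) ∧ b c = false ∧
      (pl n b c).1 = 2*(q:ℕ)+1 ∧ (pl n b c).2 = 2*(q:ℕ)+2) ∨
    (∃ q : Fin n, (q:ℕ) < n ∧ c = aC (q:ℕ) ∧ b c = true ∧
      (pl n b c).1 = 4*n-2*(q:ℕ) ∧ (pl n b c).2 = 4*n-1-2*(q:ℕ)) ∨
    (∃ q : Fin n, (q:ℕ) < n ∧ c = bC n (q:ℕ) ∧ b c = false ∧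
      (pl n b c).1 = 2*(q:ℕ)+2 ∧ (pl n b c).2 = 4*n-1-2*(q:ℕ)) ∨
    (∃ q : Fin n, (q:ℕ) < n ∧ c = bC n (q:ℕ) ∧ b c = true ∧
      (pl n b c).1 = 4*n-1-2*(q:ℕ) ∧ (pl n b c).2 = 2*(q:ℕ)+2) ∨
    (∃ q : Fin n, (q:ℕ) < n ∧ c = cC n (q:ℕ) ∧ b c = false ∧
      (pl n b c).1 = 4*n-1-2*(q:ℕ) ∧ (pl n b c).2 = 4*n-2*(q:ℕ)) ∨
    (∃ q : Fin n, (q:ℕ) < n ∧ c = cC n (q:ℕ) ∧ b c = true ∧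
      (pl n b c).1 = 2*(q:ℕ)+2 ∧ (pl n b c).2 = 2*(q:ℕ)+1) := by
  rcases mem_cardSetW1.mp hc with ⟨u, v, hE', rfl⟩ | ⟨i, rfl | rfl | rfl⟩
  · rcases Bool.eq_false_or_eq_true (b (eC (u:ℕ) (v:ℕ))) with hbc | hbc
    · have hbc' : b (2*(u:ℕ)+1, 2*(v:ℕ)+1) = true := hbc
      refine Or.inr (Or.inl ⟨u, v, u.2, v.2, hE', rfl, hbc, ?_, ?_⟩) <;>
      · have := u.2; have := v.2
        simp only [pl, hbc', if_true, rotW1, eC]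
        omega
    · have hbc' : b (2*(u:ℕ)+1, 2*(v:ℕ)+1) = false := hbc
      refine Or.inl ⟨u, v, u.2, v.2, hE', rfl, hbc, ?_, ?_⟩ <;>
        simp [pl, hbc', eC]
  · rcases Bool.eq_false_or_eq_true (b (aC (i:ℕ))) with hbc | hbc
    · have hbc' : b (2*(i:ℕ)+1, 2*(i:ℕ)+2) = true := hbc
      refine Or.inr (Or.inr (Or.inr (Or.inl ⟨i, i.2, rfl, hbc, ?_, ?_⟩))) <;>
      · have := i.2
        simp only [pl, hbc', if_true, rotW1, aC]
        omega
    · have hbc' : b (2*(i:ℕ)+1, 2*(i:ℕ)+2) = false := hbc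
      refine Or.inr (Or.inr (Or.inl ⟨i, i.2, rfl, hbc, ?_, ?_⟩)) <;> simp [pl, hbc', aC]
  · rcases Bool.eq_false_or_eq_true (b (bC n (i:ℕ))) with hbc | hbc
    · have hbc' : b (2*(i:ℕ)+2, 4*n-1-2*(i:ℕ)) = true := hbc
      refine Or.inr (Or.inr (Or.inr (Or.inr (Or.inr (Or.inl ⟨i, i.2, rfl, hbc, ?_, ?_⟩))))) <;>
      · have := i.2
        simp only [pl, hbc', if_true, rotW1, bC]
        omega
    · have hbc' : b (2*(i:ℕ)+2, 4*n-1-2*(i:ℕ)) = false := hbc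
      refine Or.inr (Or.inr (Or.inr (Or.inr (Or.inl ⟨i, i.2, rfl, hbc, ?_, ?_⟩)))) <;>
        simp [pl, hbc', bC]
  · rcases Bool.eq_false_or_eq_true (b (cC n (i:ℕ))) with hbc | hbc
    · have hbc' : b (4*n-1-2*(i:ℕ), 4*n-2*(i:ℕ)) = true := hbc
      refine Or.inr (Or.inr (Or.inr (Or.inr (Or.inr (Or.inr (Or.inr ⟨i, i.2, rfl, hbc, ?_, ?_⟩)))))) <;>
      · have := i.2
        simp only [pl, hbc', if_true, rotW1, cC]
        omega
    · have hbc' : b (4*n-1-2*(i:ℕ), 4*n-2*(i:ℕ)) = false := hbc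
      refine Or.inr (Or.inr (Or.inr (Or.inr (Or.inr (Or.inr (Or.inl ⟨i, i.2, rfl, hbc, ?_, ?_⟩)))))) <;>
        simp [pl, hbc', cC]

lemma pl_mem_Icc {n : ℕ} (hn : 1 ≤ n) {E : Finset (Fin n × Fin n)} (b : ℕ × ℕ → Bool)
    {c : ℕ × ℕ} (hc : c ∈ cardSetW1 n E) :
    (1 ≤ (pl n b c).1 ∧ (pl n b c).1 ≤ 4*n) ∧ (1 ≤ (pl n b c).2 ∧ (pl n b c).2 ≤ 4*n) := by
  rcases placed_cases hn b hc with
      ⟨u, v, hu, hv, _, _, _, hp1, hp2⟩ | ⟨u, v, hu, hv, _, _, _, hp1, hp2⟩ |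
      ⟨q, hq, _, _, hp1, hp2⟩ | ⟨q, hq, _, _, hp1, hp2⟩ | ⟨q, hq, _, _, hp1, hp2⟩ |
      ⟨q, hq, _, _, hp1, hp2⟩ | ⟨q, hq, _, _, hp1, hp2⟩ | ⟨q, hq, _, _, hp1, hp2⟩ <;>
    omega

lemma exists_unique_of_filter {α : Type} {S : Finset α} {p : α → Prop} [DecidablePred p]
    (h : (S.filter p).card = 1) :
    ∃ c, c ∈ S ∧ p c ∧ ∀ c' ∈ S, p c' → c' = c := by
  obtain ⟨a, ha⟩ := Finset.card_eq_one.mp h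
  have h1 : a ∈ S.filter p := ha ▸ Finset.mem_singleton_self a
  rw [Finset.mem_filter] at h1
  refine ⟨a, h1.1, h1.2, fun c' hc' hpc' => ?_⟩
  have : c' ∈ S.filter p := Finset.mem_filter.mpr ⟨hc', hpc'⟩
  rw [ha] at this; exact Finset.mem_singleton.mp this

lemma fibers_eq_one_of_le {S : Finset (ℕ × ℕ)} {f : ℕ × ℕ → ℕ} {t : Finset ℕ}
    (hrange : ∀ c ∈ S, f c ∈ t)
    (hle : ∀ x ∈ t, (S.filter fun c => f c = x).card ≤ 1)
    (hcard : t.card ≤ S.card) :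
    ∀ x ∈ t, (S.filter fun c => f c = x).card = 1 := by
  have hsum : ∑ x ∈ t, (S.filter fun c => f c = x).card = S.card :=
    (Finset.card_eq_sum_card_fiberwise hrange).symm
  have h1 : ∑ x ∈ t, (S.filter fun c => f c = x).card ≤ ∑ _x ∈ t, 1 :=
    Finset.sum_le_sum hle
  rw [Finset.sum_const, smul_eq_mul, mul_one] at h1
  have heq : ∑ x ∈ t, (S.filter fun c => f c = x).card = ∑ _x ∈ t, 1 := by
    rw [Finset.sum_const, smul_eq_mul, mul_one]; omega
  intro x hx
  exact (Finset.sum_eq_sum_iff_of_le hle).mp heq x hx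

lemma fibers_eq_one_of_surj {S : Finset (ℕ × ℕ)} {f : ℕ × ℕ → ℕ} {t : Finset ℕ}
    (hrange : ∀ c ∈ S, f c ∈ t)
    (hsurj : ∀ x ∈ t, ∃ c ∈ S, f c = x)
    (hcard : S.card ≤ t.card) :
    ∀ x ∈ t, (S.filter fun c => f c = x).card = 1 := by
  have hsum : ∑ x ∈ t, (S.filter fun c => f c = x).card = S.card :=
    (Finset.card_eq_sum_card_fiberwise hrange).symm
  have hge : ∀ x ∈ t, 1 ≤ (S.filter fun c => f c = x).card := by
    intro x hx
    obtain ⟨c, hcS, hcf⟩ := hsurj x hx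
    exact Finset.card_pos.mpr ⟨c, Finset.mem_filter.mpr ⟨hcS, hcf⟩⟩
  have h1 : ∑ _x ∈ t, 1 ≤ ∑ x ∈ t, (S.filter fun c => f c = x).card :=
    Finset.sum_le_sum hge
  rw [Finset.sum_const, smul_eq_mul, mul_one] at h1
  have heq : ∑ _x ∈ t, 1 = ∑ x ∈ t, (S.filter fun c => f c = x).card := by
    rw [Finset.sum_const, smul_eq_mul, mul_one]; omega
  intro x hx
  exact ((Finset.sum_eq_sum_iff_of_le hge).mp heq x hx).symm

lemma row_classify {n : ℕ} (hn : 1 ≤ n) (x : ℕ) (h1 : 1 ≤ x) (h2 : x ≤ 4*n) :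
    ∃ i : Fin n, x = 2*(i:ℕ)+1 ∨ x = 2*(i:ℕ)+2 ∨ x = 4*n-1-2*(i:ℕ) ∨ x = 4*n-2*(i:ℕ) := by
  rcases le_or_gt x (2*n) with h | h
  · rcases Nat.even_or_odd x with he | ho
    · obtain ⟨k, hk⟩ := he
      exact ⟨⟨(x-2)/2, by omega⟩, by simp only; omega⟩
    · obtain ⟨k, hk⟩ := ho
      exact ⟨⟨(x-1)/2, by omega⟩, by simp only; omega⟩
  · rcases Nat.even_or_odd x with he | ho
    · obtain ⟨k, hk⟩ := he
      exact ⟨⟨(4*n-x)/2, by omega⟩, by simp only; omega⟩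
    · obtain ⟨k, hk⟩ := ho
      exact ⟨⟨(4*n-1-x)/2, by omega⟩, by simp only; omega⟩

lemma pl_true {n : ℕ} {b : ℕ × ℕ → Bool} {c : ℕ × ℕ} (h : b c = true) :
    pl n b c = rotW1 n c := if_pos h

lemma pl_false {n : ℕ} {b : ℕ × ℕ → Bool} {c : ℕ × ℕ} (h : b c = false) :
    pl n b c = c := if_neg (by simp [h])

lemma conv_main {n : ℕ} (hn : 1 ≤ n) {E : Finset (Fin n × Fin n)} {S : Finset (ℕ × ℕ)}
    (hS : S ⊆ cardSetW1 n E) (hsw : IsRotSwish n S) (hcard : S.card = 4 * n) :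
    ∃ F, IsEvenDicycleFactor E F := by
  classical
  obtain ⟨b, hb⟩ := hsw
  have hIcc : (Finset.Icc 1 (4*n)).card = 4*n := by rw [Nat.card_Icc]; omega
  have hone1 : ∀ x ∈ Finset.Icc 1 (4*n),
      (S.filter fun c => (if b c then rotW1 n c else c).1 = x).card = 1 := by
    apply fibers_eq_one_of_le
    · intro c hc
      rw [Finset.mem_Icc]
      exact (pl_mem_Icc hn b (hS hc)).1
    · intro x hx; rcases hb x hx with ⟨h, -⟩ | ⟨h, -⟩ <;> omega
    · omega
  have hone2 : ∀ x ∈ Finset.Icc 1 (4*n),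
      (S.filter fun c => (if b c then rotW1 n c else c).2 = x).card = 1 := by
    apply fibers_eq_one_of_le
    · intro c hc
      rw [Finset.mem_Icc]
      exact (pl_mem_Icc hn b (hS hc)).2
    · intro x hx; rcases hb x hx with ⟨-, h⟩ | ⟨-, h⟩ <;> omega
    · omega
  have hoopex : ∀ x, 1 ≤ x → x ≤ 4*n →
      ∃ c, c ∈ S ∧ (pl n b c).1 = x ∧ ∀ c' ∈ S, (pl n b c').1 = x → c' = c :=
    fun x h1 h2 => exists_unique_of_filter (hone1 x (Finset.mem_Icc.mpr ⟨h1, h2⟩))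
  have ballex : ∀ x, 1 ≤ x → x ≤ 4*n →
      ∃ c, c ∈ S ∧ (pl n b c).2 = x ∧ ∀ c' ∈ S, (pl n b c').2 = x → c' = c :=
    fun x h1 h2 => exists_unique_of_filter (hone2 x (Finset.mem_Icc.mpr ⟨h1, h2⟩))
  have good : ∀ i : Fin n, ∃ ε : Bool,
      (cC n (i:ℕ) ∈ S ∧ b (cC n (i:ℕ)) = !ε) ∧
      ∃ w : Fin n, (i, w) ∈ E ∧ eC (i:ℕ) (w:ℕ) ∈ S ∧ b (eC (i:ℕ) (w:ℕ)) = ε := by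
    intro i
    have hi := i.2
    obtain ⟨c0, hc0S, hc0x, hc0u⟩ := ballex (4*n-1-2*(i:ℕ)) (by omega) (by omega)
    rcases placed_cases hn b (hS hc0S) with
        ⟨u, v, hu, hv, hEuv, hceq, hbc, hp1, hp2⟩ | ⟨u, v, hu, hv, hEuv, hceq, hbc, hp1, hp2⟩ |
        ⟨q, hq, hceq, hbc, hp1, hp2⟩ | ⟨q, hq, hceq, hbc, hp1, hp2⟩ | ⟨q, hq, hceq, hbc, hp1, hp2⟩ |
        ⟨q, hq, hceq, hbc, hp1, hp2⟩ | ⟨q, hq, hceq, hbc, hp1, hp2⟩ | ⟨q, hq, hceq, hbc, hp1, hp2⟩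
    · exfalso; omega
    · exfalso; omega
    · exfalso; omega
    · -- CASE 2 : A card rotated
      have hq' : q = i := Fin.ext (by omega)
      rw [hq'] at hceq
      rw [hceq] at hbc
      have hbA : b (aC (i:ℕ)) = true := hbc
      -- (2a) unique ball at 2i+2 gives B card rotated
      obtain ⟨c1, hc1S, hc1x, hc1u⟩ := ballex (2*(i:ℕ)+2) (by omega) (by omega)
      have hBfact : bC n (i:ℕ) ∈ S ∧ b (bC n (i:ℕ)) = true := by
        rcases placed_cases hn b (hS hc1S) with
            ⟨u, v, hu, hv, hEuv, hceq1, hbc1, hq1, hq2⟩ | ⟨u, v, hu, hv, hEuv, hceq1, hbc1, hq1, hq2⟩ |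
            ⟨q, hq, hceq1, hbc1, hq1, hq2⟩ | ⟨q, hq, hceq1, hbc1, hq1, hq2⟩ | ⟨q, hq, hceq1, hbc1, hq1, hq2⟩ |
            ⟨q, hq, hceq1, hbc1, hq1, hq2⟩ | ⟨q, hq, hceq1, hbc1, hq1, hq2⟩ | ⟨q, hq, hceq1, hbc1, hq1, hq2⟩
        · exfalso; omega
        · exfalso; omega
        · -- A unrotated : contradiction with hbA
          exfalso
          have hq2' : q = i := Fin.ext (by omega)
          rw [hq2'] at hceq1
          rw [hceq1] at hbc1
          rw [hbA] at hbc1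
          exact Bool.noConfusion hbc1
        · exfalso; omega
        · exfalso; omega
        · -- B rotated : the survivor
          have hq2' : q = i := Fin.ext (by omega)
          rw [hq2'] at hceq1
          rw [hceq1] at hbc1 hc1S
          exact ⟨hc1S, hbc1⟩
        · exfalso; omega
        · exfalso; omega
      -- (2b) unique hoop at 2i+2 gives C card rotated
      obtain ⟨c2, hc2S, hc2x, hc2u⟩ := hoopex (2*(i:ℕ)+2) (by omega) (by omega)
      have hCfact : cC n (i:ℕ) ∈ S ∧ b (cC n (i:ℕ)) = true := by
        rcases placed_cases hn b (hS hc2S) with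
            ⟨u, v, hu, hv, hEuv, hceq1, hbc1, hq1, hq2⟩ | ⟨u, v, hu, hv, hEuv, hceq1, hbc1, hq1, hq2⟩ |
            ⟨q, hq, hceq1, hbc1, hq1, hq2⟩ | ⟨q, hq, hceq1, hbc1, hq1, hq2⟩ | ⟨q, hq, hceq1, hbc1, hq1, hq2⟩ |
            ⟨q, hq, hceq1, hbc1, hq1, hq2⟩ | ⟨q, hq, hceq1, hbc1, hq1, hq2⟩ | ⟨q, hq, hceq1, hbc1, hq1, hq2⟩
        · exfalso; omega
        · exfalso; omega
        · exfalso; omega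
        · exfalso; omega
        · -- B unrotated : contradiction with hBfact.2
          exfalso
          have hq2' : q = i := Fin.ext (by omega)
          rw [hq2'] at hceq1
          rw [hceq1] at hbc1
          rw [hBfact.2] at hbc1
          exact Bool.noConfusion hbc1
        · exfalso; omega
        · exfalso; omega
        · -- C rotated : the survivor
          have hq2' : q = i := Fin.ext (by omega)
          rw [hq2'] at hceq1
          rw [hceq1] at hbc1 hc2S
          exact ⟨hc2S, hbc1⟩
      -- (2c) unique hoop at 2i+1 gives an unrotated out-edge
      obtain ⟨c3, hc3S, hc3x, hc3u⟩ := hoopex (2*(i:ℕ)+1) (by omega) (by omega)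
      refine ⟨false, ⟨hCfact.1, by simp [hCfact.2]⟩, ?_⟩
      rcases placed_cases hn b (hS hc3S) with
          ⟨u, v, hu, hv, hEuv, hceq1, hbc1, hq1, hq2⟩ | ⟨u, v, hu, hv, hEuv, hceq1, hbc1, hq1, hq2⟩ |
          ⟨q, hq, hceq1, hbc1, hq1, hq2⟩ | ⟨q, hq, hceq1, hbc1, hq1, hq2⟩ | ⟨q, hq, hceq1, hbc1, hq1, hq2⟩ |
          ⟨q, hq, hceq1, hbc1, hq1, hq2⟩ | ⟨q, hq, hceq1, hbc1, hq1, hq2⟩ | ⟨q, hq, hceq1, hbc1, hq1, hq2⟩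
      · -- E unrotated : the survivor
        have hu' : u = i := Fin.ext (by omega)
        rw [hu'] at hceq1 hEuv
        rw [hceq1] at hbc1 hc3S
        exact ⟨v, hEuv, hc3S, hbc1⟩
      · exfalso; omega
      · -- A unrotated : contradiction with hbA
        exfalso
        have hq2' : q = i := Fin.ext (by omega)
        rw [hq2'] at hceq1
        rw [hceq1] at hbc1
        rw [hbA] at hbc1
        exact Bool.noConfusion hbc1
      · exfalso; omega
      · exfalso; omega
      · exfalso; omega
      · exfalso; omega
      · exfalso; omega
    · -- CASE 1 : B card unrotated
      have hq' : q = i := Fin.ext (by omega)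
      rw [hq'] at hceq
      rw [hceq] at hbc
      have hbB : b (bC n (i:ℕ)) = false := hbc
      -- (1a) unique ball at 2i+2 gives A card unrotated
      obtain ⟨c1, hc1S, hc1x, hc1u⟩ := ballex (2*(i:ℕ)+2) (by omega) (by omega)
      have hAfact : aC (i:ℕ) ∈ S ∧ b (aC (i:ℕ)) = false := by
        rcases placed_cases hn b (hS hc1S) with
            ⟨u, v, hu, hv, hEuv, hceq1, hbc1, hq1, hq2⟩ | ⟨u, v, hu, hv, hEuv, hceq1, hbc1, hq1, hq2⟩ |
            ⟨q, hq, hceq1, hbc1, hq1, hq2⟩ | ⟨q, hq, hceq1, hbc1, hq1, hq2⟩ | ⟨q, hq, hceq1, hbc1, hq1, hq2⟩ |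
            ⟨q, hq, hceq1, hbc1, hq1, hq2⟩ | ⟨q, hq, hceq1, hbc1, hq1, hq2⟩ | ⟨q, hq, hceq1, hbc1, hq1, hq2⟩
        · exfalso; omega
        · exfalso; omega
        · -- A unrotated : the survivor
          have hq2' : q = i := Fin.ext (by omega)
          rw [hq2'] at hceq1
          rw [hceq1] at hbc1 hc1S
          exact ⟨hc1S, hbc1⟩
        · exfalso; omega
        · exfalso; omega
        · -- B rotated : contradiction with hbB
          exfalso
          have hq2' : q = i := Fin.ext (by omega)
          rw [hq2'] at hceq1
          rw [hceq1] at hbc1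
          rw [hbB] at hbc1
          exact Bool.noConfusion hbc1
        · exfalso; omega
        · exfalso; omega
      -- (1b) unique hoop at 4n-1-2i gives C card unrotated
      obtain ⟨c2, hc2S, hc2x, hc2u⟩ := hoopex (4*n-1-2*(i:ℕ)) (by omega) (by omega)
      have hCfact : cC n (i:ℕ) ∈ S ∧ b (cC n (i:ℕ)) = false := by
        rcases placed_cases hn b (hS hc2S) with
            ⟨u, v, hu, hv, hEuv, hceq1, hbc1, hq1, hq2⟩ | ⟨u, v, hu, hv, hEuv, hceq1, hbc1, hq1, hq2⟩ |
            ⟨q, hq, hceq1, hbc1, hq1, hq2⟩ | ⟨q, hq, hceq1, hbc1, hq1, hq2⟩ | ⟨q, hq, hceq1, hbc1, hq1, hq2⟩ |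
            ⟨q, hq, hceq1, hbc1, hq1, hq2⟩ | ⟨q, hq, hceq1, hbc1, hq1, hq2⟩ | ⟨q, hq, hceq1, hbc1, hq1, hq2⟩
        · exfalso; omega
        · exfalso; omega
        · exfalso; omega
        · exfalso; omega
        · exfalso; omega
        · -- B rotated : contradiction with hbB
          exfalso
          have hq2' : q = i := Fin.ext (by omega)
          rw [hq2'] at hceq1
          rw [hceq1] at hbc1
          rw [hbB] at hbc1
          exact Bool.noConfusion hbc1
        · -- C unrotated : the survivor
          have hq2' : q = i := Fin.ext (by omega)
          rw [hq2'] at hceq1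
          rw [hceq1] at hbc1 hc2S
          exact ⟨hc2S, hbc1⟩
        · exfalso; omega
      -- (1c) unique hoop at 4n-2i gives a rotated out-edge
      obtain ⟨c3, hc3S, hc3x, hc3u⟩ := hoopex (4*n-2*(i:ℕ)) (by omega) (by omega)
      refine ⟨true, ⟨hCfact.1, by simp [hCfact.2]⟩, ?_⟩
      rcases placed_cases hn b (hS hc3S) with
          ⟨u, v, hu, hv, hEuv, hceq1, hbc1, hq1, hq2⟩ | ⟨u, v, hu, hv, hEuv, hceq1, hbc1, hq1, hq2⟩ |
          ⟨q, hq, hceq1, hbc1, hq1, hq2⟩ | ⟨q, hq, hceq1, hbc1, hq1, hq2⟩ | ⟨q, hq, hceq1, hbc1, hq1, hq2⟩ |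
          ⟨q, hq, hceq1, hbc1, hq1, hq2⟩ | ⟨q, hq, hceq1, hbc1, hq1, hq2⟩ | ⟨q, hq, hceq1, hbc1, hq1, hq2⟩
      · exfalso; omega
      · -- E rotated : the survivor
        have hu' : u = i := Fin.ext (by omega)
        rw [hu'] at hceq1 hEuv
        rw [hceq1] at hbc1 hc3S
        exact ⟨v, hEuv, hc3S, hbc1⟩
      · exfalso; omega
      · -- A rotated : contradiction with hAfact.2
        exfalso
        have hq2' : q = i := Fin.ext (by omega)
        rw [hq2'] at hceq1
        rw [hceq1] at hbc1
        rw [hAfact.2] at hbc1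
        exact Bool.noConfusion hbc1
      · exfalso; omega
      · exfalso; omega
      · exfalso; omega
      · exfalso; omega
    · exfalso; omega
    · exfalso; omega
    · exfalso; omega
  choose ε hgood using good
  choose w hwE hwS hwb using fun i => (hgood i).2
  have hC1 : ∀ i : Fin n, cC n (i:ℕ) ∈ S := fun i => (hgood i).1.1
  have hC2 : ∀ i : Fin n, b (cC n (i:ℕ)) = !ε i := fun i => (hgood i).1.2
  have halt : ∀ i, ε (w i) = !ε i := by
    intro i
    have hi := i.2
    have hj := (w i).2
    by_contra hne
    have heq : ε (w i) = ε i := by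
      revert hne
      cases ε (w i) <;> cases ε i <;> simp
    cases h2 : ε i with
    | true =>
      obtain ⟨c, hcS, hcx, hcu⟩ := ballex (4*n-2*((w i : Fin n):ℕ)) (by omega) (by omega)
      have hb1 : b (eC (i:ℕ) ((w i):ℕ)) = true := by rw [hwb i, h2]
      have hb2 : b (cC n ((w i):ℕ)) = false := by
        rw [hC2 (w i), heq, h2]; rfl
      have e1 : eC (i:ℕ) ((w i):ℕ) = c := by
        apply hcu _ (hwS i)
        rw [pl_true hb1]
        simp only [rotW1, eC]
        omega
      have e2 : cC n ((w i):ℕ) = c := by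
        apply hcu _ (hC1 (w i))
        rw [pl_false hb2]
        simp only [cC]
      have e3 := e1.trans e2.symm
      simp only [eC, cC, Prod.mk.injEq] at e3
      omega
    | false =>
      obtain ⟨c, hcS, hcx, hcu⟩ := ballex (2*((w i : Fin n):ℕ)+1) (by omega) (by omega)
      have hb1 : b (eC (i:ℕ) ((w i):ℕ)) = false := by rw [hwb i, h2]
      have hb2 : b (cC n ((w i):ℕ)) = true := by
        rw [hC2 (w i), heq, h2]; rfl
      have e1 : eC (i:ℕ) ((w i):ℕ) = c := by
        apply hcu _ (hwS i)
        rw [pl_false hb1]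
        simp only [eC]
      have e2 : cC n ((w i):ℕ) = c := by
        apply hcu _ (hC1 (w i))
        rw [pl_true hb2]
        simp only [rotW1, cC]
        omega
      have e3 := e1.trans e2.symm
      simp only [eC, cC, Prod.mk.injEq] at e3
      omega
  have hinj : Function.Injective w := by
    intro i i' he
    have hi := i.2
    have hi' := i'.2
    have hj := (w i).2
    have hei : ε i = ε i' := by
      have h1 := halt i
      have h2 := halt i'
      rw [he] at h1
      rw [h1] at h2
      revert h2
      cases ε i <;> cases ε i' <;> simp
    have hbb : b (eC (i':ℕ) ((w i'):ℕ)) = b (eC (i:ℕ) ((w i):ℕ)) := by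
      rw [hwb i, hwb i', hei]
    cases hv : ε i with
    | true =>
      obtain ⟨c, hcS, hcx, hcu⟩ := ballex (4*n-2*((w i : Fin n):ℕ)) (by omega) (by omega)
      have hb1 : b (eC (i:ℕ) ((w i):ℕ)) = true := by rw [hwb i, hv]
      have hb1' : b (eC (i':ℕ) ((w i'):ℕ)) = true := by rw [hbb, hb1]
      have e1 : eC (i:ℕ) ((w i):ℕ) = c := by
        apply hcu _ (hwS i)
        rw [pl_true hb1]
        simp only [rotW1, eC]
        omega
      have e2 : eC (i':ℕ) ((w i'):ℕ) = c := by
        apply hcu _ (hwS i')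
        rw [pl_true hb1']
        simp only [rotW1, eC]
        rw [← he]
        omega
      have e3 := e1.trans e2.symm
      simp only [eC, Prod.mk.injEq] at e3
      exact Fin.ext (by omega)
    | false =>
      obtain ⟨c, hcS, hcx, hcu⟩ := ballex (2*((w i : Fin n):ℕ)+1) (by omega) (by omega)
      have hb1 : b (eC (i:ℕ) ((w i):ℕ)) = false := by rw [hwb i, hv]
      have hb1' : b (eC (i':ℕ) ((w i'):ℕ)) = false := by rw [hbb, hb1]
      have e1 : eC (i:ℕ) ((w i):ℕ) = c := by
        apply hcu _ (hwS i)
        rw [pl_false hb1]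
        simp only [eC]
      have e2 : eC (i':ℕ) ((w i'):ℕ) = c := by
        apply hcu _ (hwS i')
        rw [pl_false hb1']
        simp only [eC]
        rw [← he]
      have e3 := e1.trans e2.symm
      simp only [eC, Prod.mk.injEq] at e3
      exact Fin.ext (by omega)
  have hbij : Function.Bijective w := Finite.injective_iff_bijective.mp hinj
  let π : Equiv.Perm (Fin n) := Equiv.ofBijective w hbij
  refine ⟨Finset.univ.image (fun v => (v, π v)), π, rfl, fun v => hwE v, ?_⟩
  exact (evenorbits_iff_alternating π).mpr ⟨ε, fun v => halt v⟩

lemma fwd_main {n : ℕ} (hn : 1 ≤ n) {E : Finset (Fin n × Fin n)}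
    (h : ∃ F, IsEvenDicycleFactor E F) :
    ∃ S ⊆ cardSetW1 n E, IsRotSwish n S ∧ S.card = 4 * n := by
  classical
  obtain ⟨F, π, hF, hE, horb⟩ := h
  obtain ⟨ε, hε⟩ := (evenorbits_iff_alternating π).mp horb
  set eS : Finset (ℕ × ℕ) :=
    Finset.univ.image (fun v : Fin n => eC (v:ℕ) ((π v : Fin n):ℕ)) with heS
  set vS : Finset (ℕ × ℕ) :=
    (Finset.univ ×ˢ ({1, 2, 3} : Finset ℕ)).image
      (fun p : Fin n × ℕ => (rowOf n p.1 p.2, rowOf n p.1 (p.2 + 1))) with hvS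
  set S : Finset (ℕ × ℕ) := eS ∪ vS with hSdef
  -- membership facts
  have heMem : ∀ v : Fin n, eC (v:ℕ) ((π v):ℕ) ∈ S :=
    fun v => Finset.mem_union_left _ (Finset.mem_image.mpr ⟨v, Finset.mem_univ v, rfl⟩)
  have haMem : ∀ i : Fin n, aC (i:ℕ) ∈ S :=
    fun i => Finset.mem_union_right _ (Finset.mem_image.mpr ⟨(i, 1), by simp, rfl⟩)
  have hbMem : ∀ i : Fin n, bC n (i:ℕ) ∈ S :=
    fun i => Finset.mem_union_right _ (Finset.mem_image.mpr ⟨(i, 2), by simp, rfl⟩)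
  have hcMem : ∀ i : Fin n, cC n (i:ℕ) ∈ S :=
    fun i => Finset.mem_union_right _ (Finset.mem_image.mpr ⟨(i, 3), by simp, rfl⟩)
  -- the rotation function
  set ε' : ℕ → Bool := fun m => if h : m < n then ε ⟨m, h⟩ else true with hε'def
  set b : ℕ × ℕ → Bool := fun c =>
    if c.1 % 2 = 1 then
      if c.2 % 2 = 1 then ε' ((c.1 - 1) / 2)
      else if c.1 < 2*n then !ε' ((c.1 - 1) / 2)
      else !ε' ((4*n - 1 - c.1) / 2)
    else !ε' ((c.1 - 2) / 2) with hbdef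
  have hε'c : ∀ i : Fin n, ε' (i:ℕ) = ε i := by
    intro i
    rw [hε'def]
    simp only [i.2, dif_pos]
  have hbe : ∀ u v : Fin n, b (eC (u:ℕ) (v:ℕ)) = ε u := by
    intro u v
    have hu := u.2
    rw [hbdef]
    dsimp only [eC]
    rw [if_pos (by omega), if_pos (by omega),
      show (2*(u:ℕ)+1-1)/2 = (u:ℕ) by omega, hε'c]
  have hba : ∀ i : Fin n, b (aC (i:ℕ)) = !ε i := by
    intro i
    have hi := i.2
    rw [hbdef]
    dsimp only [aC]
    rw [if_pos (by omega), if_neg (by omega), if_pos (by omega),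
      show (2*(i:ℕ)+1-1)/2 = (i:ℕ) by omega, hε'c]
  have hbb : ∀ i : Fin n, b (bC n (i:ℕ)) = !ε i := by
    intro i
    have hi := i.2
    rw [hbdef]
    dsimp only [bC]
    rw [if_neg (by omega), show (2*(i:ℕ)+2-2)/2 = (i:ℕ) by omega, hε'c]
  have hbcc : ∀ i : Fin n, b (cC n (i:ℕ)) = !ε i := by
    intro i
    have hi := i.2
    rw [hbdef]
    dsimp only [cC]
    rw [if_pos (by omega), if_neg (by omega), if_neg (by omega),
      show (4*n-1-(4*n-1-2*(i:ℕ)))/2 = (i:ℕ) by omega, hε'c]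
  -- subset of the card set
  have hsub : S ⊆ cardSetW1 n E := by
    apply Finset.union_subset
    · intro c hc
      obtain ⟨v, -, rfl⟩ := Finset.mem_image.mp hc
      exact mem_cardSetW1.mpr (Or.inl ⟨v, π v, hE v, rfl⟩)
    · rw [hvS]
      unfold cardSetW1
      exact Finset.subset_union_right
  -- cardinality
  have hdisj : Disjoint eS vS := by
    rw [Finset.disjoint_left]
    intro c hce hcv
    obtain ⟨v, -, rfl⟩ := Finset.mem_image.mp hce
    obtain ⟨p, hp, heq⟩ := Finset.mem_image.mp hcv
    have hp2 : p.2 = 1 ∨ p.2 = 2 ∨ p.2 = 3 := by simpa using (Finset.mem_product.mp hp).2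
    have h1 := (π v).2
    have h2 := p.1.2
    have hv2 := v.2
    rcases hp2 with hj | hj | hj <;>
      (rw [hj] at heq; simp only [rowOf, eC, Prod.ext_iff] at heq; norm_num at heq; omega)
  have hcardE : eS.card = n := by
    rw [heS, Finset.card_image_of_injective _ ?_, Finset.card_univ, Fintype.card_fin]
    intro a a' hh
    simp only [eC, Prod.mk.injEq] at hh
    exact Fin.ext (by omega)
  have hcardV : vS.card = 3 * n := by
    rw [hvS, Finset.card_image_of_injOn ?_]
    · have h3 : ({1, 2, 3} : Finset ℕ).card = 3 := by decide
      rw [Finset.card_product, Finset.card_univ, Fintype.card_fin, h3]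
      ring
    · rintro ⟨i, j⟩ hp ⟨i', j'⟩ hp' heq
      have hj : j = 1 ∨ j = 2 ∨ j = 3 := by simpa using (Finset.mem_product.mp hp).2
      have hj' : j' = 1 ∨ j' = 2 ∨ j' = 3 := by simpa using (Finset.mem_product.mp hp').2
      have h1 := i.2
      have h2 := i'.2
      rcases hj with rfl | rfl | rfl <;> rcases hj' with rfl | rfl | rfl <;>
        (simp only [rowOf, Prod.ext_iff] at heq; norm_num at heq ⊢; try exact Fin.ext (by omega)) <;>
        omega
  have hScard : S.card = 4 * n := by
    rw [hSdef, Finset.card_union_of_disjoint hdisj, hcardE, hcardV]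
    omega
  -- surjectivity of hoops
  have hsurj1 : ∀ x ∈ Finset.Icc 1 (4*n), ∃ c ∈ S, (pl n b c).1 = x := by
    intro x hx
    rw [Finset.mem_Icc] at hx
    obtain ⟨i, hcase⟩ := row_classify hn x hx.1 hx.2
    have hi := i.2
    rcases hcase with hxv | hxv | hxv | hxv <;> rcases Bool.eq_false_or_eq_true (ε i) with hv | hv
    · -- x = 2i+1, ε i = true : unrotated A card
      refine ⟨aC (i:ℕ), haMem i, ?_⟩
      rw [pl_false (by rw [hba, hv]; decide)]
      simp only [aC]; omega
    · -- x = 2i+1, ε i = false : unrotated out-edge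
      refine ⟨eC (i:ℕ) ((π i):ℕ), heMem i, ?_⟩
      rw [pl_false (by rw [hbe, hv])]
      simp only [eC]; omega
    · -- x = 2i+2, ε i = true : unrotated B card
      refine ⟨bC n (i:ℕ), hbMem i, ?_⟩
      rw [pl_false (by rw [hbb, hv]; decide)]
      simp only [bC]; omega
    · -- x = 2i+2, ε i = false : rotated C card
      refine ⟨cC n (i:ℕ), hcMem i, ?_⟩
      rw [pl_true (by rw [hbcc, hv]; decide)]
      simp only [rotW1, cC]; omega
    · -- x = 4n-1-2i, ε i = true : unrotated C card
      refine ⟨cC n (i:ℕ), hcMem i, ?_⟩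
      rw [pl_false (by rw [hbcc, hv]; decide)]
      simp only [cC]; omega
    · -- x = 4n-1-2i, ε i = false : rotated B card
      refine ⟨bC n (i:ℕ), hbMem i, ?_⟩
      rw [pl_true (by rw [hbb, hv]; decide)]
      simp only [rotW1, bC]; omega
    · -- x = 4n-2i, ε i = true : rotated out-edge
      refine ⟨eC (i:ℕ) ((π i):ℕ), heMem i, ?_⟩
      rw [pl_true (by rw [hbe, hv])]
      simp only [rotW1, eC]; omega
    · -- x = 4n-2i, ε i = false : rotated A card
      refine ⟨aC (i:ℕ), haMem i, ?_⟩
      rw [pl_true (by rw [hba, hv]; decide)]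
      simp only [rotW1, aC]; omega
  -- surjectivity of balls
  have hsurj2 : ∀ x ∈ Finset.Icc 1 (4*n), ∃ c ∈ S, (pl n b c).2 = x := by
    intro x hx
    rw [Finset.mem_Icc] at hx
    obtain ⟨i, hcase⟩ := row_classify hn x hx.1 hx.2
    have hi := i.2
    rcases hcase with hxv | hxv | hxv | hxv <;> rcases Bool.eq_false_or_eq_true (ε i) with hv | hv
    · -- x = 2i+1, ε i = true : unrotated in-edge from π⁻¹ i
      have hpu : π (π.symm i) = i := Equiv.apply_symm_apply π i
      have hεu : ε (π.symm i) = false := by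
        have h' := hε (π.symm i)
        rw [hpu, hv] at h'
        revert h'
        cases ε (π.symm i) <;> simp
      refine ⟨eC ((π.symm i):ℕ) ((π (π.symm i)):ℕ), heMem (π.symm i), ?_⟩
      rw [pl_false (by rw [hbe, hεu])]
      simp only [eC]
      rw [hpu]; omega
    · -- x = 2i+1, ε i = false : rotated C card
      refine ⟨cC n (i:ℕ), hcMem i, ?_⟩
      rw [pl_true (by rw [hbcc, hv]; decide)]
      simp only [rotW1, cC]; omega
    · -- x = 2i+2, ε i = true : unrotated A card
      refine ⟨aC (i:ℕ), haMem i, ?_⟩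
      rw [pl_false (by rw [hba, hv]; decide)]
      simp only [aC]; omega
    · -- x = 2i+2, ε i = false : rotated B card
      refine ⟨bC n (i:ℕ), hbMem i, ?_⟩
      rw [pl_true (by rw [hbb, hv]; decide)]
      simp only [rotW1, bC]; omega
    · -- x = 4n-1-2i, ε i = true : unrotated B card
      refine ⟨bC n (i:ℕ), hbMem i, ?_⟩
      rw [pl_false (by rw [hbb, hv]; decide)]
      simp only [bC]; omega
    · -- x = 4n-1-2i, ε i = false : rotated A card
      refine ⟨aC (i:ℕ), haMem i, ?_⟩
      rw [pl_true (by rw [hba, hv]; decide)]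
      simp only [rotW1, aC]; omega
    · -- x = 4n-2i, ε i = true : unrotated C card
      refine ⟨cC n (i:ℕ), hcMem i, ?_⟩
      rw [pl_false (by rw [hbcc, hv]; decide)]
      simp only [cC]; omega
    · -- x = 4n-2i, ε i = false : rotated in-edge from π⁻¹ i
      have hpu : π (π.symm i) = i := Equiv.apply_symm_apply π i
      have hεu : ε (π.symm i) = true := by
        have h' := hε (π.symm i)
        rw [hpu, hv] at h'
        revert h'
        cases ε (π.symm i) <;> simp
      refine ⟨eC ((π.symm i):ℕ) ((π (π.symm i)):ℕ), heMem (π.symm i), ?_⟩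
      rw [pl_true (by rw [hbe, hεu])]
      simp only [rotW1, eC]
      rw [hpu]; omega
  have hIcc : (Finset.Icc 1 (4*n)).card = 4*n := by rw [Nat.card_Icc]; omega
  have hone1 : ∀ x ∈ Finset.Icc 1 (4*n),
      (S.filter fun c => (pl n b c).1 = x).card = 1 := by
    apply fibers_eq_one_of_surj
    · intro c hc
      rw [Finset.mem_Icc]
      exact (pl_mem_Icc hn b (hsub hc)).1
    · exact hsurj1
    · omega
  have hone2 : ∀ x ∈ Finset.Icc 1 (4*n),
      (S.filter fun c => (pl n b c).2 = x).card = 1 := by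
    apply fibers_eq_one_of_surj
    · intro c hc
      rw [Finset.mem_Icc]
      exact (pl_mem_Icc hn b (hsub hc)).2
    · exact hsurj2
    · omega
  exact ⟨S, hsub, ⟨b, fun x hx => Or.inr ⟨hone1 x hx, hone2 x hx⟩⟩, hScard⟩

lemma allswish_iff_rotswish (n : ℕ) (S : Finset (ℕ × ℕ)) :
    IsAllSwish n S ↔ IsRotSwish n S := by
  constructor
  · rintro ⟨g, hg⟩
    refine ⟨fun c => decide (1 < ((g c : Fin 4) : ℕ)), ?_⟩
    have e : ∀ c : ℕ × ℕ,
        (if (decide (1 < ((g c : Fin 4) : ℕ))) then rotW1 n c else c) = place4 n (g c) c := by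
      intro c
      unfold place4
      rcases Nat.lt_or_ge 1 ((g c : Fin 4) : ℕ) with h | h
      · rw [if_pos (by simpa using h), if_neg (by omega)]
      · rw [if_neg (by simpa using h), if_pos (by omega)]
    intro x hx
    simp only [e]
    exact hg x hx
  · rintro ⟨b, hb⟩
    refine ⟨fun c => if b c then (2 : Fin 4) else 0, ?_⟩
    have e : ∀ c : ℕ × ℕ,
        place4 n (if b c then (2 : Fin 4) else 0) c = (if b c then rotW1 n c else c) := by
      intro c
      cases hbc : b c <;> simp [hbc, place4]
    intro x hx
    simp only [e]
    exact hb x hx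


theorem stmt13 (n : ℕ) (hn : 1 ≤ n) (E : Finset (Fin n × Fin n)) :
    ((∃ F, IsEvenDicycleFactor E F) ↔
      (∃ S ⊆ cardSetW1 n E, IsAllSwish n S ∧ S.card = 4 * n)) ∧
    ((∃ S ⊆ cardSetW1 n E, IsAllSwish n S ∧ S.card = 4 * n) ↔
      (∃ S ⊆ cardSetW1 n E, IsRotSwish n S ∧ S.card = 4 * n)) := by
  have h2 : (∃ S ⊆ cardSetW1 n E, IsAllSwish n S ∧ S.card = 4 * n) ↔
      (∃ S ⊆ cardSetW1 n E, IsRotSwish n S ∧ S.card = 4 * n) := by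
    constructor
    · rintro ⟨S, hsub, hsw, hcard⟩
      exact ⟨S, hsub, (allswish_iff_rotswish n S).mp hsw, hcard⟩
    · rintro ⟨S, hsub, hsw, hcard⟩
      exact ⟨S, hsub, (allswish_iff_rotswish n S).mpr hsw, hcard⟩
  refine ⟨?_, h2⟩
  rw [h2]
  constructor
  · exact fun h => fwd_main hn h
  · rintro ⟨S, hsub, hsw, hcard⟩
    exact conv_main hn hsub hsw hcard
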